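/- (Discrete Leibniz-commutator estimate, case $n=0$.) Let $1 \leq \alpha \leq 2$ and let $u \in H^{\alpha}(\mathbb{T})$ with Fourier coefficients $u_k$. Then the function $F_\alpha(u) := \bar{u}|D|^\alpha u + u |D|^\alpha \bar{u} - |D|^\alpha(|u|^2)$ satisfies $\|F_\alpha(u)\|_{L^2} \leq C \, \| |D|^{\alpha/2}\tilde{u} \|_{L^4}^2$, where $\tilde{u} := \sum_k |u_k| e^{ikx}$ and $C$ is an absolute constant (one may take $C = 2$). -/

import Mathlib

/-!
Writing `X = |l|^{α/2}`, `Y = |k-l|^{α/2}`, `Z = |k|^{α/2}`, the symbol bound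
`||l|^α + |k-l|^α - |k|^α| ≤ 2XY` is `(X - Y)² ≤ Z² ≤ (X + Y)²`, which holds because
`t ↦ t^{α/2}` is monotone and subadditive for `α ≤ 2`. So the `k`-th coefficient of `F_α(u)` is
at most twice the autocorrelation `S_k = ∑_l a_l a_{l-k}` of `a_l = |l|^{α/2} |u_l|`.

It remains to see that `S ∈ ℓ²`, so that the right-hand side is an honest sum. With the weight
`w_l = (1 + l²)^{α/2}`, AM-GM gives `a_l a_{l-k} ≤ ½ (w_l a_l² w_{l-k}⁻¹ + w_{l-k} a_{l-k}² w_l⁻¹)`,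
and both terms are correlations of `w a² ∈ ℓ¹` (as `u ∈ H^α`) with `w⁻¹ ∈ ℓ²` (as `α > 1/2`),
which lie in `ℓ²` by Young's inequality.
-/

open Real Complex

lemma rpow_half_sq {x : ℝ} (hx : 0 ≤ x) (α : ℝ) : (x ^ (α / 2)) ^ 2 = x ^ α := by
  rw [← rpow_natCast, ← rpow_mul hx]; norm_num

lemma abs_rpow_sub_rpow_le_abs_sub_rpow {x y p : ℝ} (hx : 0 ≤ x) (hy : 0 ≤ y) (hp : 0 ≤ p)
    (hp1 : p ≤ 1) : |x ^ p - y ^ p| ≤ |x - y| ^ p := by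
  wlog hyx : y ≤ x generalizing x y
  · rw [abs_sub_comm, abs_sub_comm x]
    exact this hy hx (le_of_not_ge hyx)
  have hsub : x ^ p ≤ (x - y) ^ p + y ^ p := by
    simpa using rpow_add_le_add_rpow (sub_nonneg.2 hyx) hy hp hp1
  rw [abs_of_nonneg (sub_nonneg.2 hyx), abs_of_nonneg (sub_nonneg.2 (rpow_le_rpow hy hyx hp))]
  linarith

lemma abs_sq_add_sq_sub_sq_le {X Y Z : ℝ} (h₁ : |X - Y| ≤ Z) (h₂ : Z ≤ X + Y) :
    |X ^ 2 + Y ^ 2 - Z ^ 2| ≤ 2 * (X * Y) := by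
  have hZ : 0 ≤ Z := (abs_nonneg _).trans h₁
  have hlow : (X - Y) ^ 2 ≤ Z ^ 2 := by
    simpa only [sq_abs] using pow_le_pow_left₀ (abs_nonneg _) h₁ 2
  have hup : Z ^ 2 ≤ (X + Y) ^ 2 := pow_le_pow_left₀ hZ h₂ 2
  rw [abs_le]
  constructor <;> nlinarith

lemma abs_rpow_add_rpow_sub_rpow_le {x y z α : ℝ} (hx : 0 ≤ x) (hy : 0 ≤ y) (hα : 0 ≤ α)
    (hα2 : α ≤ 2) (h₁ : |x - y| ≤ z) (h₂ : z ≤ x + y) :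
    |x ^ α + y ^ α - z ^ α| ≤ 2 * (x ^ (α / 2) * y ^ (α / 2)) := by
  have hz : 0 ≤ z := (abs_nonneg _).trans h₁
  have hp : 0 ≤ α / 2 := by linarith
  have hp1 : α / 2 ≤ 1 := by linarith
  rw [← rpow_half_sq hx, ← rpow_half_sq hy, ← rpow_half_sq hz]
  refine abs_sq_add_sq_sub_sq_le ?_ ?_
  · exact (abs_rpow_sub_rpow_le_abs_sub_rpow hx hy hp hp1).trans
      (rpow_le_rpow (abs_nonneg _) h₁ hp)
  · exact (rpow_le_rpow hz h₂ hp).trans (rpow_add_le_add_rpow hx hy hp hp1)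

lemma abs_commutatorSymbol_le {α : ℝ} (hα : 0 ≤ α) (hα2 : α ≤ 2) (k l : ℤ) :
    |(|(l : ℝ)| ^ α + |((k - l : ℤ) : ℝ)| ^ α - |(k : ℝ)| ^ α)| ≤
      2 * (|(l : ℝ)| ^ (α / 2) * |((k - l : ℤ) : ℝ)| ^ (α / 2)) := by
  refine abs_rpow_add_rpow_sub_rpow_le (abs_nonneg _) (abs_nonneg _) hα hα2 ?_ ?_
  · simpa [abs_sub_comm] using abs_abs_sub_abs_le_abs_sub (l : ℝ) (l - k)
  · simpa using abs_add_le (l : ℝ) (k - l)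

lemma sq_tsum_le_tsum_mul_tsum_of_sq_le_mul {ι : Type*} {r f g : ι → ℝ} (hr : 0 ≤ r)
    (hf : 0 ≤ f) (hg : 0 ≤ g) (hfs : Summable f) (hgs : Summable g)
    (hrfg : ∀ i, r i ^ 2 ≤ f i * g i) : (∑' i, r i) ^ 2 ≤ (∑' i, f i) * ∑' i, g i := by
  have hFG : 0 ≤ (∑' i, f i) * ∑' i, g i := mul_nonneg (tsum_nonneg hf) (tsum_nonneg hg)
  suffices h : ∑' i, r i ≤ √((∑' i, f i) * ∑' i, g i) by
    simpa [sq_sqrt hFG] using pow_le_pow_left₀ (tsum_nonneg hr) h 2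
  refine Real.tsum_le_of_sum_le hr fun s => Real.le_sqrt_of_sq_le ?_
  calc (∑ i ∈ s, r i) ^ 2 ≤ (∑ i ∈ s, f i) * ∑ i ∈ s, g i :=
        Finset.sum_sq_le_sum_mul_sum_of_sq_le_mul s (fun i _ => hf i) (fun i _ => hg i)
          (fun i _ => hrfg i)
    _ ≤ (∑' i, f i) * ∑' i, g i :=
        mul_le_mul (hfs.sum_le_tsum s fun i _ => hf i) (hgs.sum_le_tsum s fun i _ => hg i)
          (Finset.sum_nonneg fun i _ => hg i) (tsum_nonneg hf)

lemma tsum_norm_tsum_sq_le {ι κ E : Type*} [NormedAddCommGroup E] {f : ι → κ → E}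
    {b : ι → κ → ℝ} {C : ℝ} (hfb : ∀ i j, ‖f i j‖ ≤ C * b i j) (hb : ∀ i, Summable (b i))
    (hb2 : Summable fun i => (∑' j, b i j) ^ 2) :
    ∑' i, ‖∑' j, f i j‖ ^ 2 ≤ C ^ 2 * ∑' i, (∑' j, b i j) ^ 2 := by
  have hnorm : ∀ i, ‖∑' j, f i j‖ ≤ C * ∑' j, b i j := fun i => by
    have hs : Summable fun j => ‖f i j‖ :=
      ((hb i).mul_left C).of_nonneg_of_le (fun j => norm_nonneg _) (hfb i)
    calc ‖∑' j, f i j‖ ≤ ∑' j, ‖f i j‖ := norm_tsum_le_tsum_norm hs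
      _ ≤ ∑' j, C * b i j := hs.tsum_le_tsum (hfb i) ((hb i).mul_left C)
      _ = C * ∑' j, b i j := tsum_mul_left
  have hsq : ∀ i, ‖∑' j, f i j‖ ^ 2 ≤ C ^ 2 * (∑' j, b i j) ^ 2 := fun i => by
    rw [← mul_pow]; exact pow_le_pow_left₀ (norm_nonneg _) (hnorm i) 2
  calc ∑' i, ‖∑' j, f i j‖ ^ 2 ≤ ∑' i, C ^ 2 * (∑' j, b i j) ^ 2 :=
        ((hb2.mul_left _).of_nonneg_of_le (fun i => sq_nonneg _) hsq).tsum_le_tsum hsq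
          (hb2.mul_left _)
    _ = C ^ 2 * ∑' i, (∑' j, b i j) ^ 2 := tsum_mul_left

lemma mul_le_add_div_two_of_pos {x y s t : ℝ} (hs : 0 < s) (ht : 0 < t) :
    x * y ≤ (s * x ^ 2 * t⁻¹ + t * y ^ 2 * s⁻¹) / 2 := by
  have hsq : s * x ^ 2 * t⁻¹ + t * y ^ 2 * s⁻¹ - 2 * (x * y) = (s * x - t * y) ^ 2 / (s * t) := by
    field_simp
    ring
  have : 0 ≤ (s * x - t * y) ^ 2 / (s * t) := by positivity
  linarith

section Correlation

variable {G : Type*} [AddCommGroup G]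

lemma summable_mul_comp_sub_of_le {d e : G → ℝ} (hd0 : 0 ≤ d) (he0 : 0 ≤ e) (hd : Summable d)
    {B : ℝ} (heB : ∀ m, e m ≤ B) (k : G) : Summable fun l => d l * e (l - k) :=
  (hd.mul_right B).of_nonneg_of_le (fun l => mul_nonneg (hd0 l) (he0 _))
    fun l => mul_le_mul_of_nonneg_left (heB _) (hd0 l)

-- Young's inequality `ℓ¹ ⋆ ℓ² ⊆ ℓ²`, via Cauchy–Schwarz `(∑ d e)² ≤ (∑ d) (∑ d e²)` and Fubini.
lemma summable_sq_tsum_mul_comp_sub {d e : G → ℝ} (hd0 : 0 ≤ d) (he0 : 0 ≤ e) (hd : Summable d)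
    (he : Summable fun i => e i ^ 2) : Summable fun k => (∑' l, d l * e (l - k)) ^ 2 := by
  have hinner : ∀ k, Summable fun l => d l * e (l - k) ^ 2 :=
    summable_mul_comp_sub_of_le (e := fun i => e i ^ 2) hd0 (fun i => sq_nonneg (e i)) hd
      fun m => he.le_tsum m fun i _ => sq_nonneg (e i)
  let shear : G × G ≃ G × G :=
    { toFun := fun p => (p.2, p.2 - p.1)
      invFun := fun q => (q.1 - q.2, q.1)
      left_inv := fun p => by simp
      right_inv := fun q => by simp }
  have hprod : Summable fun p : G × G => d p.2 * e (p.2 - p.1) ^ 2 :=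
    shear.summable_iff.2 (hd.mul_of_nonneg he hd0 fun i => sq_nonneg (e i))
  have houter : Summable fun k => ∑' l, d l * e (l - k) ^ 2 :=
    ((summable_prod_of_nonneg fun p => mul_nonneg (hd0 _) (sq_nonneg _)).1 hprod).2
  refine (houter.mul_left (∑' l, d l)).of_nonneg_of_le (fun k => sq_nonneg _) fun k => ?_
  exact sq_tsum_le_tsum_mul_tsum_of_sq_le_mul (fun l => mul_nonneg (hd0 l) (he0 _)) hd0
    (fun l => mul_nonneg (hd0 l) (sq_nonneg _)) hd (hinner k) fun l => le_of_eq (by ring)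

lemma summable_sq_tsum_mul_comp_sub_self {a w : G → ℝ} (ha : 0 ≤ a) (hw : ∀ i, 0 < w i)
    (hwa : Summable fun i => w i * a i ^ 2) (hw' : Summable fun i => (w i)⁻¹ ^ 2) :
    Summable fun k => (∑' l, a l * a (l - k)) ^ 2 := by
  set d : G → ℝ := fun i => w i * a i ^ 2
  set e : G → ℝ := fun i => (w i)⁻¹
  have hd0 : 0 ≤ d := fun i => mul_nonneg (hw i).le (sq_nonneg _)
  have he0 : 0 ≤ e := fun i => inv_nonneg.2 (hw i).le
  have heB : ∀ m, e m ≤ 1 + ∑' i, e i ^ 2 := fun m => by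
    nlinarith [hw'.le_tsum m fun i _ => sq_nonneg (e i), sq_nonneg (e m - 1)]
  have hP := summable_sq_tsum_mul_comp_sub hd0 he0 hwa hw'
  have hQ_eq : ∀ k, ∑' l, d (l - k) * e l = ∑' l, d l * e (l - -k) := fun k => by
    rw [← (Equiv.addRight k).tsum_eq]; simp
  have hQ : Summable fun k => (∑' l, d (l - k) * e l) ^ 2 := by
    refine (hP.comp_injective neg_injective).congr fun k => ?_
    simp only [Function.comp, hQ_eq]
  have hpt : ∀ k l, a l * a (l - k) ≤ (d l * e (l - k) + d (l - k) * e l) / 2 := fun k l =>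
    mul_le_add_div_two_of_pos (hw l) (hw (l - k))
  have hPs := summable_mul_comp_sub_of_le hd0 he0 hwa heB
  have hQs : ∀ k, Summable fun l => d (l - k) * e l := fun k =>
    ((Equiv.subRight k).summable_iff.2 hwa |>.mul_right (1 + ∑' i, e i ^ 2)).of_nonneg_of_le
      (fun l => mul_nonneg (hd0 _) (he0 l)) fun l => mul_le_mul_of_nonneg_left (heB l) (hd0 _)
  have hS : ∀ k, ∑' l, a l * a (l - k) ≤
      ((∑' l, d l * e (l - k)) + ∑' l, d (l - k) * e l) / 2 := fun k => by
    have hsum := ((hPs k).add (hQs k)).div_const 2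
    rw [← (hPs k).tsum_add (hQs k), ← tsum_div_const]
    exact (hsum.of_nonneg_of_le (fun l => mul_nonneg (ha l) (ha _)) (hpt k)).tsum_le_tsum
      (hpt k) hsum
  refine ((hP.add hQ).div_const 2).of_nonneg_of_le (fun k => sq_nonneg _) fun k => ?_
  have h0 : 0 ≤ ∑' l, a l * a (l - k) := tsum_nonneg fun l => mul_nonneg (ha l) (ha _)
  nlinarith [hS k, sq_nonneg ((∑' l, d l * e (l - k)) - ∑' l, d (l - k) * e l)]

lemma summable_mul_comp_sub_self {a : G → ℝ} (ha : Summable fun i => a i ^ 2) (k : G) :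
    Summable fun l => a l * a (l - k) := by
  have hshift : Summable fun l => a (l - k) ^ 2 := (Equiv.subRight k).summable_iff.2 ha
  refine ((ha.add hshift).div_const 2).of_norm_bounded fun l => ?_
  rw [Real.norm_eq_abs, abs_mul]
  nlinarith [sq_nonneg (|a l| - |a (l - k)|), sq_abs (a l), sq_abs (a (l - k))]

end Correlation

lemma summable_one_add_sq_rpow_neg {s : ℝ} (hs : 1 / 2 < s) :
    Summable fun n : ℤ => (1 + |(n : ℝ)| ^ 2) ^ (-s) := by
  refine (summable_abs_int_rpow (b := 2 * s) (by linarith)).of_norm_bounded_eventually ?_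
  filter_upwards [Filter.eventually_cofinite_ne 0] with n hn
  have hpos : 0 < |(n : ℝ)| ^ 2 := by positivity
  rw [norm_of_nonneg (by positivity), show -(2 * s) = (2 : ℕ) * -s by push_cast; ring,
    rpow_mul (abs_nonneg _), rpow_natCast]
  exact rpow_le_rpow_of_nonpos hpos (by linarith) (by linarith)

lemma norm_commutatorTerm_le {α : ℝ} (hα : 0 ≤ α) (hα2 : α ≤ 2) (u : ℤ → ℂ) (k l : ℤ) :
    ‖(((|(l : ℝ)| ^ α + |((k - l : ℤ) : ℝ)| ^ α - |(k : ℝ)| ^ α) : ℝ) : ℂ) * u l *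
        starRingEnd ℂ (u (l - k))‖ ≤
      2 * (|(l : ℝ)| ^ (α / 2) * |((k - l : ℤ) : ℝ)| ^ (α / 2) * ‖u l‖ * ‖u (l - k)‖) := by
  rw [norm_mul, norm_mul, Complex.norm_real, Real.norm_eq_abs, RCLike.norm_conj, mul_assoc,
    mul_assoc, ← mul_assoc (2 : ℝ)]
  exact mul_le_mul_of_nonneg_right (abs_commutatorSymbol_le hα hα2 k l) (by positivity)

lemma summable_one_add_sq_rpow_mul_sq {α : ℝ} (hα : 0 ≤ α) {u : ℤ → ℂ}
    (hu : Summable fun k : ℤ => (1 + |(k : ℝ)| ^ 2) ^ α * ‖u k‖ ^ 2) :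
    Summable fun l : ℤ => (1 + |(l : ℝ)| ^ 2) ^ (α / 2) * (|(l : ℝ)| ^ (α / 2) * ‖u l‖) ^ 2 := by
  refine hu.of_nonneg_of_le (fun l => by positivity) fun l => ?_
  have hpos : 0 ≤ 1 + |(l : ℝ)| ^ 2 := by positivity
  calc (1 + |(l : ℝ)| ^ 2) ^ (α / 2) * (|(l : ℝ)| ^ (α / 2) * ‖u l‖) ^ 2
      = (1 + |(l : ℝ)| ^ 2) ^ (α / 2) * ((|(l : ℝ)| ^ 2) ^ (α / 2) * ‖u l‖ ^ 2) := by
        rw [mul_pow, rpow_pow_comm (abs_nonneg _)]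
    _ ≤ (1 + |(l : ℝ)| ^ 2) ^ (α / 2) * ((1 + |(l : ℝ)| ^ 2) ^ (α / 2) * ‖u l‖ ^ 2) := by
        gcongr; linarith
    _ = (1 + |(l : ℝ)| ^ 2) ^ α * ‖u l‖ ^ 2 := by
        rw [← mul_assoc, ← sq, rpow_half_sq hpos]

/-- Discrete Leibniz-commutator estimate, case `n = 0`.  In terms of Fourier
coefficients `u : ℤ → ℂ`, the `k`-th Fourier coefficient of
`F_α(u) = ū |D|^α u + u |D|^α ū - |D|^α(|u|²)` is
`∑_l (|l|^α + |k-l|^α - |k|^α) u_l conj (u_{l-k})`, while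
`‖|D|^{α/2} ũ‖_{L⁴}⁴ = ∑_k (∑_l |l|^{α/2} |k-l|^{α/2} |u_l| |u_{l-k}|)²`
where `ũ = ∑ |u_k| e^{ikx}` (Parseval).  The statement
`‖F_α(u)‖_{L²} ≤ 2 ‖|D|^{α/2} ũ‖_{L⁴}²` then reads, after squaring: -/
theorem commutator_L2_est_n_zero (α : ℝ) (hα : 1 ≤ α) (hα2 : α ≤ 2) (u : ℤ → ℂ)
    (hu : Summable fun k : ℤ => (1 + |(k : ℝ)| ^ 2) ^ α * ‖u k‖ ^ 2) :
    ∑' k : ℤ,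
        ‖∑' l : ℤ,
            (((|(l : ℝ)| ^ α + |((k - l : ℤ) : ℝ)| ^ α - |(k : ℝ)| ^ α) : ℝ) : ℂ) *
              u l * starRingEnd ℂ (u (l - k))‖ ^ 2 ≤
      2 ^ 2 *
        ∑' k : ℤ,
          (∑' l : ℤ,
              |(l : ℝ)| ^ (α / 2) * |((k - l : ℤ) : ℝ)| ^ (α / 2) * ‖u l‖ *
                ‖u (l - k)‖) ^ 2 := by
  have hα0 : 0 ≤ α := by linarith
  set a : ℤ → ℝ := fun l => |(l : ℝ)| ^ (α / 2) * ‖u l‖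
  set w : ℤ → ℝ := fun l => (1 + |(l : ℝ)| ^ 2) ^ (α / 2)
  have hrhs : ∀ k l : ℤ, |(l : ℝ)| ^ (α / 2) * |((k - l : ℤ) : ℝ)| ^ (α / 2) * ‖u l‖ *
      ‖u (l - k)‖ = a l * a (l - k) := fun k l => by
    simp only [a, Int.cast_sub, abs_sub_comm (k : ℝ)]; ring
  have hw1 : ∀ l, 1 ≤ w l := fun l =>
    one_le_rpow (le_add_of_nonneg_right (by positivity)) (by linarith)
  have hwa : Summable fun l => w l * a l ^ 2 := summable_one_add_sq_rpow_mul_sq hα0 hu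
  have hw' : Summable fun l => (w l)⁻¹ ^ 2 := by
    refine (summable_one_add_sq_rpow_neg (s := α) (by linarith)).congr fun l => ?_
    rw [inv_pow, rpow_half_sq (by positivity), rpow_neg (by positivity)]
  have ha2 : Summable fun l => a l ^ 2 :=
    hwa.of_nonneg_of_le (fun l => sq_nonneg _) fun l => le_mul_of_one_le_left (sq_nonneg _) (hw1 l)
  simp only [hrhs]
  exact tsum_norm_tsum_sq_le
    (fun k l => (norm_commutatorTerm_le hα0 hα2 u k l).trans_eq (by rw [hrhs]))
    (summable_mul_comp_sub_self ha2)
    (summable_sq_tsum_mul_comp_sub_self (fun l => by positivity)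
      (fun l => zero_lt_one.trans_le (hw1 l)) hwa hw')
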